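/- Suppose r₁ = r₃ = p and r₂ = r₄ = q with p > 5q > 0. Then G has exactly 3 critical points in the open square S, namely (0,0), (a,−a) and (−a,a), where a = √(1 − 4q/(p−q)). -/

import Mathlib

noncomputable section

/-- `K = r₁ + r₃ − r₂ − r₄`. -/
def Kq (r₁ r₂ r₃ r₄ : ℝ) : ℝ := r₁ + r₃ - r₂ - r₄

/-- `N(a₁,a₂) = a₁a₂K + a₁(K+2(r₂−r₃)) + a₂(K+2(r₄−r₃)) + K + 2(r₂+r₄)`. -/
def Nq (r₁ r₂ r₃ r₄ a₁ a₂ : ℝ) : ℝ :=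
  a₁ * a₂ * Kq r₁ r₂ r₃ r₄ + a₁ * (Kq r₁ r₂ r₃ r₄ + 2 * (r₂ - r₃)) +
    a₂ * (Kq r₁ r₂ r₃ r₄ + 2 * (r₄ - r₃)) + Kq r₁ r₂ r₃ r₄ + 2 * (r₂ + r₄)

/-- `P(a₁,a₂) = 3(1−a₁²)·∂N/∂a₁ + 2a₁·N`, where `∂N/∂a₁ = a₂K + K + 2(r₂−r₃)`. -/
def Pq (r₁ r₂ r₃ r₄ a₁ a₂ : ℝ) : ℝ :=
  3 * (1 - a₁ ^ 2) * (a₂ * Kq r₁ r₂ r₃ r₄ + (Kq r₁ r₂ r₃ r₄ + 2 * (r₂ - r₃))) +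
    2 * a₁ * Nq r₁ r₂ r₃ r₄ a₁ a₂

/-- `Q(a₁,a₂) = 3(1−a₂²)·∂N/∂a₂ + 2a₂·N`, where `∂N/∂a₂ = a₁K + K + 2(r₄−r₃)`. -/
def Qq (r₁ r₂ r₃ r₄ a₁ a₂ : ℝ) : ℝ :=
  3 * (1 - a₂ ^ 2) * (a₁ * Kq r₁ r₂ r₃ r₄ + (Kq r₁ r₂ r₃ r₄ + 2 * (r₄ - r₃))) +
    2 * a₂ * Nq r₁ r₂ r₃ r₄ a₁ a₂

/-- The open square `S = {(a₁,a₂) : |a₁| < 1, |a₂| < 1}`. -/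
def Sq : Set (ℝ × ℝ) := {a | |a.1| < 1 ∧ |a.2| < 1}

/-- `G(a₁,a₂) = N(a₁,a₂)³ / ((1−a₁²)(1−a₂²))` on `S`. -/
def Gq (r₁ r₂ r₃ r₄ : ℝ) (a : ℝ × ℝ) : ℝ :=
  Nq r₁ r₂ r₃ r₄ a.1 a.2 ^ 3 / ((1 - a.1 ^ 2) * (1 - a.2 ^ 2))

/-!
For `r = (p, q, p, q)` one has `N = 2(p − q)(1 + a₁a₂) + 4q`, which is positive on `S` as soon as
`q ≤ p`. Since `∂G/∂a₁ = N² P / ((1 − a₁²)²(1 − a₂²))` and symmetrically for `a₂` with `Q`, the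
critical points of `G` in `S` are the common zeros of `P` and `Q` there. Now
`P + Q = (a₁ + a₂)(2(p − q)(5 − a₁a₂) + 8q)` with a positive second factor, so `a₂ = −a₁`, and on
that antidiagonal `P = 2a₁((p − q)a₁² − (p − 5q))`, whose roots are `0` and `±a`.
-/

open ContinuousLinearMap

theorem smul_fst_add_smul_snd_eq_zero_iff {R : Type*} [CommSemiring R] [TopologicalSpace R]
    [IsTopologicalSemiring R] (c₁ c₂ : R) :
    c₁ • fst R R R + c₂ • snd R R R = 0 ↔ c₁ = 0 ∧ c₂ = 0 := by
  refine ⟨fun h => ⟨?_, ?_⟩, fun ⟨h₁, h₂⟩ => by ext <;> simp [h₁, h₂]⟩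
  · simpa using congrArg (fun L : R × R →L[R] R => L (1, 0)) h
  · simpa using congrArg (fun L : R × R →L[R] R => L (0, 1)) h

theorem one_sub_sq_pos_of_abs_lt_one {x : ℝ} (hx : |x| < 1) : 0 < 1 - x ^ 2 :=
  sub_pos.2 ((sq_lt_one_iff_abs_lt_one x).2 hx)

section GeneralRadii

variable (r₁ r₂ r₃ r₄ : ℝ)

theorem hasFDerivAt_Nq (a : ℝ × ℝ) :
    HasFDerivAt (fun x : ℝ × ℝ => Nq r₁ r₂ r₃ r₄ x.1 x.2)
      ((a.2 * Kq r₁ r₂ r₃ r₄ + (Kq r₁ r₂ r₃ r₄ + 2 * (r₂ - r₃))) • fst ℝ ℝ ℝ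
        + (a.1 * Kq r₁ r₂ r₃ r₄ + (Kq r₁ r₂ r₃ r₄ + 2 * (r₄ - r₃))) • snd ℝ ℝ ℝ) a := by
  have h₁ : HasFDerivAt (fun x : ℝ × ℝ => x.1) (fst ℝ ℝ ℝ) a := hasFDerivAt_fst
  have h₂ : HasFDerivAt (fun x : ℝ × ℝ => x.2) (snd ℝ ℝ ℝ) a := hasFDerivAt_snd
  refine (((((h₁.mul h₂).mul_const _).add (h₁.mul_const _)).add (h₂.mul_const _)).add_const
    (Kq r₁ r₂ r₃ r₄)).add_const (2 * (r₂ + r₄)) |>.congr_fderiv (ext fun v => ?_)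
  simp only [add_apply, smul_apply, coe_fst', coe_snd', smul_eq_mul]
  ring

theorem hasFDerivAt_Gq {a : ℝ × ℝ} (h₁ : 1 - a.1 ^ 2 ≠ 0) (h₂ : 1 - a.2 ^ 2 ≠ 0) :
    HasFDerivAt (Gq r₁ r₂ r₃ r₄)
      ((Nq r₁ r₂ r₃ r₄ a.1 a.2 ^ 2 * Pq r₁ r₂ r₃ r₄ a.1 a.2 /
          ((1 - a.1 ^ 2) ^ 2 * (1 - a.2 ^ 2))) • fst ℝ ℝ ℝ
        + (Nq r₁ r₂ r₃ r₄ a.1 a.2 ^ 2 * Qq r₁ r₂ r₃ r₄ a.1 a.2 /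
          ((1 - a.1 ^ 2) * (1 - a.2 ^ 2) ^ 2)) • snd ℝ ℝ ℝ) a := by
  have hfst : HasFDerivAt (fun x : ℝ × ℝ => x.1) (fst ℝ ℝ ℝ) a := hasFDerivAt_fst
  have hsnd : HasFDerivAt (fun x : ℝ × ℝ => x.2) (snd ℝ ℝ ℝ) a := hasFDerivAt_snd
  have hden := ((hasFDerivAt_const (1 : ℝ) a).sub (hfst.pow 2)).mul
    ((hasFDerivAt_const (1 : ℝ) a).sub (hsnd.pow 2))
  have hG := ((hasFDerivAt_Nq r₁ r₂ r₃ r₄ a).pow 3).mul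
    ((hasFDerivAt_inv (mul_ne_zero h₁ h₂)).comp a hden)
  refine hG.congr_fderiv (ext fun v => ?_) |>.congr_of_eventuallyEq
    (Filter.Eventually.of_forall fun x => div_eq_mul_inv _ _)
  simp only [Pi.sub_apply, Nat.add_one_sub_one, pow_one, nsmul_eq_mul, Nat.cast_ofNat, zero_sub,
    smul_neg, comp_add, comp_neg, comp_smulₛₗ, Real.ringHom_apply, smul_add, Function.comp_apply,
    Pi.mul_apply, mul_inv_rev, add_apply, neg_apply, smul_apply, comp_apply, coe_snd',
    toSpanSingleton_apply, smul_eq_mul, mul_neg, neg_neg, coe_fst', Pq, Qq]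
  field_simp
  ring

theorem fderiv_Gq_eq_zero_iff {a : ℝ × ℝ} (ha : a ∈ Sq) (hN : Nq r₁ r₂ r₃ r₄ a.1 a.2 ≠ 0) :
    fderiv ℝ (Gq r₁ r₂ r₃ r₄) a = 0 ↔
      Pq r₁ r₂ r₃ r₄ a.1 a.2 = 0 ∧ Qq r₁ r₂ r₃ r₄ a.1 a.2 = 0 := by
  have h₁ := (one_sub_sq_pos_of_abs_lt_one ha.1).ne'
  have h₂ := (one_sub_sq_pos_of_abs_lt_one ha.2).ne'
  rw [(hasFDerivAt_Gq r₁ r₂ r₃ r₄ h₁ h₂).fderiv, smul_fst_add_smul_snd_eq_zero_iff]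
  simp [hN, h₁, h₂]

end GeneralRadii

section EqualOppositeRadii

variable {p q : ℝ}

theorem Nq_self_self (x y : ℝ) : Nq p q p q x y = 2 * (p - q) * (1 + x * y) + 4 * q := by
  simp only [Nq, Kq]; ring

theorem Pq_self_self (x y : ℝ) :
    Pq p q p q x y = 2 * (p - q) * (3 * y - x ^ 2 * y + 2 * x) + 8 * q * x := by
  simp only [Pq, Nq, Kq]; ring

theorem Qq_self_self (x y : ℝ) :
    Qq p q p q x y = 2 * (p - q) * (3 * x - y ^ 2 * x + 2 * y) + 8 * q * y := by
  simp only [Qq, Nq, Kq]; ring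

theorem abs_mul_lt_one_of_mem_Sq {a : ℝ × ℝ} (ha : a ∈ Sq) : |a.1 * a.2| < 1 := by
  rw [abs_mul]
  exact mul_lt_one_of_nonneg_of_lt_one_left (abs_nonneg _) ha.1 ha.2.le

theorem Nq_self_self_pos (hq : 0 < q) (hqp : q ≤ p) {a : ℝ × ℝ} (ha : a ∈ Sq) :
    0 < Nq p q p q a.1 a.2 := by
  have hxy := neg_lt_of_abs_lt (abs_mul_lt_one_of_mem_Sq ha)
  rw [Nq_self_self]
  nlinarith

theorem Pq_Qq_self_self_eq_zero_iff (hq : 0 < q) (hqp : q ≤ p) {x y : ℝ} (hxy : x * y < 1) :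
    Pq p q p q x y = 0 ∧ Qq p q p q x y = 0 ↔
      y = -x ∧ (x = 0 ∨ (p - q) * x ^ 2 = p - 5 * q) := by
  simp only [Pq_self_self, Qq_self_self]
  constructor
  · rintro ⟨hP, hQ⟩
    have hsum : (x + y) * (2 * (p - q) * (5 - x * y) + 8 * q) = 0 := by
      linear_combination hP + hQ
    have hy : y = -x := by
      have hpos : 0 < 2 * (p - q) * (5 - x * y) + 8 * q := by nlinarith
      linear_combination (mul_eq_zero.1 hsum).resolve_right hpos.ne'
    subst hy
    have hx : x * ((p - q) * x ^ 2 - (p - 5 * q)) = 0 := by linear_combination hP / 2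
    refine ⟨rfl, (mul_eq_zero.1 hx).imp id fun h => ?_⟩
    linear_combination h
  · rintro ⟨rfl, hx | hx⟩
    · subst hx; constructor <;> ring
    · constructor
      · linear_combination 2 * x * hx
      · linear_combination -2 * x * hx

theorem fderiv_Gq_self_self_eq_zero_iff (hq : 0 < q) (hqp : q ≤ p) {a : ℝ × ℝ} (ha : a ∈ Sq) :
    fderiv ℝ (Gq p q p q) a = 0 ↔ a.2 = -a.1 ∧ (a.1 = 0 ∨ (p - q) * a.1 ^ 2 = p - 5 * q) := by
  rw [fderiv_Gq_eq_zero_iff p q p q ha (Nq_self_self_pos hq hqp ha).ne']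
  exact Pq_Qq_self_self_eq_zero_iff hq hqp (abs_lt.1 (abs_mul_lt_one_of_mem_Sq ha)).2

theorem sub_mul_sq_eq_iff (hq : 0 < q) (hpq : 5 * q ≤ p) (x : ℝ) :
    (p - q) * x ^ 2 = p - 5 * q ↔
      x = √(1 - 4 * q / (p - q)) ∨ x = -√(1 - 4 * q / (p - q)) := by
  have hpq' : 0 < p - q := by linarith
  have hnonneg : 0 ≤ 1 - 4 * q / (p - q) := by
    rw [sub_nonneg, div_le_one hpq']; linarith
  rw [← sq_eq_sq_iff_eq_or_eq_neg, Real.sq_sqrt hnonneg, one_sub_div hpq'.ne',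
    eq_div_iff hpq'.ne']
  constructor <;> intro h <;> linarith

theorem sqrt_one_sub_four_mul_div_mem_Ioo (hq : 0 < q) (hpq : 5 * q < p) :
    √(1 - 4 * q / (p - q)) ∈ Set.Ioo 0 1 := by
  constructor
  · exact Real.sqrt_pos.2 (by rw [sub_pos, div_lt_one (by linarith)]; linarith)
  · rw [Real.sqrt_lt' one_pos, one_pow]
    exact sub_lt_self _ (div_pos (by positivity) (by linarith))

theorem setOf_fderiv_Gq_self_self_eq_zero (hq : 0 < q) (hpq : 5 * q < p) :
    {a ∈ Sq | fderiv ℝ (Gq p q p q) a = 0} =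
      {(0, 0), (√(1 - 4 * q / (p - q)), -√(1 - 4 * q / (p - q))),
        (-√(1 - 4 * q / (p - q)), √(1 - 4 * q / (p - q)))} := by
  obtain ⟨hA_pos, hA_lt⟩ := sqrt_one_sub_four_mul_div_mem_Ioo hq hpq
  set A := √(1 - 4 * q / (p - q)) with hA_def
  have hqp : q ≤ p := by linarith
  ext a
  simp only [Set.mem_ofPred_eq, Set.mem_insert_iff, Set.mem_singleton_iff]
  constructor
  · rintro ⟨ha, hcrit⟩
    obtain ⟨hanti, hx⟩ := (fderiv_Gq_self_self_eq_zero_iff hq hqp ha).1 hcrit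
    rw [sub_mul_sq_eq_iff hq hpq.le, ← hA_def] at hx
    rcases hx with hx | hx | hx <;> simp [Prod.ext_iff, hanti, hx]
  · intro ha
    have hmem : a ∈ Sq := by
      rcases ha with rfl | rfl | rfl <;> simp [Sq, abs_of_pos hA_pos, hA_lt]
    refine ⟨hmem, (fderiv_Gq_self_self_eq_zero_iff hq hqp hmem).2 ?_⟩
    rw [sub_mul_sq_eq_iff hq hpq.le, ← hA_def]
    rcases ha with rfl | rfl | rfl <;> simp

end EqualOppositeRadii

/-- For `r₁ = r₃ = p`, `r₂ = r₄ = q` with `p > 5q > 0`, the function `G`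
has exactly `3` critical points in the open square `S`, namely `(0,0)`, `(a,−a)` and
`(−a,a)`, where `a = √(1 − 4q/(p−q))`. -/
theorem stmt17 (p q : ℝ) (hq : 0 < q) (hpq : 5 * q < p) :
    {a ∈ Sq | fderiv ℝ (Gq p q p q) a = 0} =
        {((0 : ℝ), (0 : ℝ)),
          (Real.sqrt (1 - 4 * q / (p - q)), -Real.sqrt (1 - 4 * q / (p - q))),
          (-Real.sqrt (1 - 4 * q / (p - q)), Real.sqrt (1 - 4 * q / (p - q)))} ∧
      {a ∈ Sq | fderiv ℝ (Gq p q p q) a = 0}.ncard = 3 := by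
  have hcrit := setOf_fderiv_Gq_self_self_eq_zero hq hpq
  have hA_pos := (sqrt_one_sub_four_mul_div_mem_Ioo hq hpq).1
  refine ⟨hcrit, Set.ncard_eq_three.2 ⟨_, _, _, ?_, ?_, ?_, hcrit⟩⟩ <;>
    simp only [ne_eq, Prod.mk.injEq, not_and] <;> intros <;> linarith
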